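/- arXiv:2009.02934 — 3 statements merged into one kernel-verified Lean document; each statement's English description precedes it below -/
import Mathlib

section
/- Let k ≥ 2 and let u : ℕ → A be a k-automatic infinite word over a finite alphabet A (i.e., the k-kernel of u is finite). If u contains only finitely many distinct palindromic factors, then the sequence PPL_u : ℕ → ℤ is k-regular. -/
/-- Prefix `u[0..n-1]` of the infinite word `u`. -/
def wordPrefix {A : Type*} (u : ℕ → A) (n : ℕ) : List A :=
  List.ofFn (fun i : Fin n => u i)

/-- Factor `u[i..i+ℓ-1]` of the infinite word `u`. -/
def wordFactor {A : Type*} (u : ℕ → A) (i ℓ : ℕ) : List A :=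
  List.ofFn (fun j : Fin ℓ => u (i + j))

/-- A palindrome is a word equal to its reversal. -/
def IsPalindrome {A : Type*} (w : List A) : Prop := w.reverse = w

/-- `w` is a concatenation of `k` nonempty palindromes. -/
def IsPalConcat {A : Type*} (w : List A) (k : ℕ) : Prop :=
  ∃ ps : List (List A), ps.length = k ∧ (∀ p ∈ ps, p ≠ [] ∧ IsPalindrome p) ∧ ps.flatten = w

/-- Prefix palindromic length: the least number of nonempty palindromes whose
concatenation is the prefix of length `n` of `u` (`PPL u 0 = 0`). -/
noncomputable def PPL {A : Type*} (u : ℕ → A) (n : ℕ) : ℕ :=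
  sInf {k | IsPalConcat (wordPrefix u n) k}

/-- The PPL-difference sequence `d_u(n) = PPL_u(n+1) - PPL_u(n)`. -/
noncomputable def PPLdiff {A : Type*} (u : ℕ → A) (n : ℕ) : ℤ :=
  (PPL u (n + 1) : ℤ) - (PPL u n : ℤ)

/-- The `k`-kernel of a sequence `x`: all subsequences `(x (k^e * n + b))_n` with `b < k^e`. -/
def kernelSeq {S : Type*} (k : ℕ) (x : ℕ → S) : Set (ℕ → S) :=
  {y | ∃ e b : ℕ, b < k ^ e ∧ y = fun n => x (k ^ e * n + b)}

/-!
Let `L` bound the lengths of the palindromic factors of `u`. A shortest factorization of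
`u[0..n]` ends in a palindromic suffix, so `PPL u (n + 1) = 1 + PPL u (n + 1 - ℓ)` for the best
length `ℓ ≤ L` of a palindromic suffix. Therefore the state made of the last `L` letters and of
the differences `PPL u (n - j) - PPL u n` (`j ≤ L`), which are bounded, is updated by a function
of the state and the letter `u n`: it is the run of a finite automaton on `u`. Runs of finite
automata on `k`-automatic inputs are `k`-automatic (the transitions form a `k`-automatic sequence
in the finite monoid of self-maps of the states, and prefix products in a finite monoid preserve
automaticity), so the first differences of `PPL u` are `k`-automatic, and partial sums of a
`k`-automatic integer sequence are `k`-regular.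
-/

section Kernel

variable {S T : Type*} {k : ℕ}

theorem kernelSeq_map_finite {x : ℕ → S} (hx : (kernelSeq k x).Finite) (f : S → T) :
    (kernelSeq k (fun n => f (x n))).Finite := by
  refine (hx.image (fun y n => f (y n))).subset ?_
  rintro _ ⟨e, b, hb, rfl⟩
  exact ⟨_, ⟨e, b, hb, rfl⟩, rfl⟩

theorem kernelSeq_shift_finite {x : ℕ → S} (hx : (kernelSeq k x).Finite) (c : ℕ) :
    (kernelSeq k (fun n => x (n + c))).Finite := by
  refine ((hx.prod (Set.finite_Iic c)).image (fun p n => p.1 (n + p.2))).subset ?_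
  rintro _ ⟨e, b, hb, rfl⟩
  have hK : 0 < k ^ e := by omega
  have hq : (b + c) / k ^ e ≤ c := by
    rw [← Nat.lt_succ_iff, Nat.div_lt_iff_lt_mul hK]
    nlinarith
  refine ⟨(fun n => x (k ^ e * n + (b + c) % k ^ e), (b + c) / k ^ e),
    ⟨⟨e, _, Nat.mod_lt _ hK, rfl⟩, hq⟩, funext fun n => ?_⟩
  have := Nat.div_add_mod (b + c) (k ^ e)
  simp only [mul_add]
  congr 1
  omega

theorem kernelSeq_prod_range_finite {M : Type*} [Monoid M] [Finite M] {s : ℕ → M}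
    (hs : (kernelSeq k s).Finite) :
    (kernelSeq k (fun n => ((List.range n).map s).prod)).Finite := by
  have := hs.to_subtype
  let col : ℕ → kernelSeq k s → M := fun n y => y.1 n
  have hblock : ∀ e b, b ≤ k ^ e → ∃ g : (kernelSeq k s → M) → M,
      ∀ n, ((List.range b).map (fun r => s (k ^ e * n + r))).prod = g (col n) := by
    intro e b
    induction b with
    | zero => exact fun _ => ⟨fun _ => 1, fun _ => rfl⟩
    | succ b ih =>
      intro hb
      obtain ⟨g, hg⟩ := ih (by omega)
      refine ⟨fun c => g c * c ⟨fun n => s (k ^ e * n + b), e, b, hb, rfl⟩, fun n => ?_⟩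
      simp [List.range_succ, hg, col]
  refine ((Set.finite_univ.prod Set.finite_univ).image
    (fun gh : ((kernelSeq k s → M) → M) × ((kernelSeq k s → M) → M) =>
      fun n => ((List.range n).map (fun i => gh.1 (col i))).prod * gh.2 (col n))).subset ?_
  rintro _ ⟨e, b, hb, rfl⟩
  obtain ⟨g, hg⟩ := hblock e (k ^ e) le_rfl
  obtain ⟨h, hh⟩ := hblock e b hb.le
  have hmul : ∀ n, ((List.range (k ^ e * n)).map s).prod
      = ((List.range n).map (fun i => g (col i))).prod := by
    intro n
    induction n with
    | zero => simp
    | succ n ih =>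
      rw [Nat.mul_succ, List.range_add, List.map_append, List.prod_append, ih, List.map_map,
        List.range_succ, List.map_append, List.prod_append]
      simp [Function.comp_def, hg]
  refine ⟨(g, h), ⟨trivial, trivial⟩, funext fun n => ?_⟩
  simp only [List.range_add, List.map_append, List.prod_append, hmul, List.map_map, ← hh]
  rfl

theorem kernelSeq_finite_of_transition {Γ Q : Type*} {a : ℕ → Γ} {x : ℕ → Q}
    (ha : (kernelSeq k a).Finite) (hx : (Set.range x).Finite)
    (hstep : ∀ m n, a m = a n → x m = x n → x (m + 1) = x (n + 1)) :
    (kernelSeq k x).Finite := by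
  classical
  have := hx.to_subtype
  have : Finite (Function.End (Set.range x))ᵐᵒᵖ :=
    Finite.of_equiv (Set.range x → Set.range x) MulOpposite.opEquiv
  let T : Γ → Function.End (Set.range x) := fun g q =>
    if h : ∃ m, a m = g ∧ x m = q then ⟨x (h.choose + 1), _, rfl⟩ else q
  have hT : ∀ n, T (a n) ⟨x n, n, rfl⟩ = ⟨x (n + 1), n + 1, rfl⟩ := by
    intro n
    have h : ∃ m, a m = a n ∧ x m = x n := ⟨n, rfl, rfl⟩
    simp only [T, dif_pos h]
    exact Subtype.ext (hstep _ _ h.choose_spec.1 h.choose_spec.2)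
  -- in the opposite monoid, `P n` is `T (a (n - 1)) ∘ ⋯ ∘ T (a 0)`
  let P : ℕ → (Function.End (Set.range x))ᵐᵒᵖ :=
    fun n => ((List.range n).map (fun m => MulOpposite.op (T (a m)))).prod
  have hP : ∀ n, (P n).unop ⟨x 0, Set.mem_range_self 0⟩ = ⟨x n, n, rfl⟩ := by
    intro n
    induction n with
    | zero => rfl
    | succ n ih =>
      simp only [P, List.range_succ, List.map_append, List.prod_append, List.map_singleton,
        List.prod_singleton, MulOpposite.unop_mul, MulOpposite.unop_op] at ih ⊢
      exact (congrArg (T (a n)) ih).trans (hT n)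
  have hx' : x = fun n => ((P n).unop ⟨x 0, Set.mem_range_self 0⟩).1 :=
    funext fun n => congrArg Subtype.val (hP n).symm
  rw [hx']
  exact kernelSeq_map_finite
    (kernelSeq_prod_range_finite (kernelSeq_map_finite ha fun g => MulOpposite.op (T g)))
    fun p => (p.unop ⟨x 0, Set.mem_range_self 0⟩).1

theorem span_kernelSeq_partialSum_fg {d : ℕ → ℤ} (hd : (kernelSeq k d).Finite) :
    (Submodule.span ℤ (kernelSeq k (fun n => ∑ m ∈ Finset.range n, d m))).FG := by
  let sums : (ℕ → ℤ) → ℕ → ℤ := fun y n => ∑ m ∈ Finset.range n, y m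
  refine Submodule.FG.of_le (Submodule.fg_span ((hd.image sums).union hd))
    (Submodule.span_le.mpr ?_)
  rintro _ ⟨e, b, hb, rfl⟩
  have hblocks : ∀ n, ∑ m ∈ Finset.range (k ^ e * n), d m
      = ∑ i ∈ Finset.range n, ∑ r ∈ Finset.range (k ^ e), d (k ^ e * i + r) := by
    intro n
    induction n with
    | zero => simp
    | succ n ih => rw [Nat.mul_succ, Finset.sum_range_add, ih, Finset.sum_range_succ]
  have hsplit : (fun n => ∑ m ∈ Finset.range (k ^ e * n + b), d m)
      = ∑ r ∈ Finset.range (k ^ e), sums (fun n => d (k ^ e * n + r))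
        + ∑ r ∈ Finset.range b, fun n => d (k ^ e * n + r) := by
    funext n
    simp only [Pi.add_apply, Finset.sum_apply, sums, Finset.sum_range_add, hblocks,
      Finset.sum_comm (s := Finset.range n)]
  rw [hsplit]
  refine Submodule.add_mem _ (Submodule.sum_mem _ fun r hr => ?_)
    (Submodule.sum_mem _ fun r hr => ?_)
  · exact Submodule.subset_span (Or.inl ⟨_, ⟨e, r, Finset.mem_range.mp hr, rfl⟩, rfl⟩)
  · exact Submodule.subset_span (Or.inr ⟨e, r, (Finset.mem_range.mp hr).trans hb, rfl⟩)

end Kernel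

section PalLength

variable {A : Type*}

noncomputable def palLength (w : List A) : ℕ := sInf {k | IsPalConcat w k}

theorem PPL_eq_palLength (u : ℕ → A) (n : ℕ) : PPL u n = palLength (wordPrefix u n) := rfl

theorem IsPalConcat.append {p s : List A} {a b : ℕ} (hp : IsPalConcat p a)
    (hs : IsPalConcat s b) : IsPalConcat (p ++ s) (a + b) := by
  obtain ⟨ps, rfl, hps, rfl⟩ := hp
  obtain ⟨ss, rfl, hss, rfl⟩ := hs
  exact ⟨ps ++ ss, List.length_append,
    fun q hq => (List.mem_append.mp hq).elim (hps q) (hss q), List.flatten_append⟩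

theorem isPalConcat_length (w : List A) : IsPalConcat w w.length :=
  ⟨w.map ([·]), List.length_map _, by simp [IsPalindrome], by induction w <;> simp_all⟩

theorem isPalConcat_palLength (w : List A) : IsPalConcat w (palLength w) :=
  Nat.sInf_mem (s := {k | IsPalConcat w k}) ⟨_, isPalConcat_length w⟩

theorem palLength_le {w : List A} {k : ℕ} (h : IsPalConcat w k) : palLength w ≤ k :=
  Nat.sInf_le h

theorem palLength_append_le (p s : List A) : palLength (p ++ s) ≤ palLength p + palLength s :=
  palLength_le ((isPalConcat_palLength p).append (isPalConcat_palLength s))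

theorem palLength_le_length (w : List A) : palLength w ≤ w.length :=
  palLength_le (isPalConcat_length w)

theorem palLength_le_one {s : List A} (hs : IsPalindrome s) : palLength s ≤ 1 := by
  rcases eq_or_ne s [] with rfl | hne
  · exact (palLength_le_length _).trans zero_le_one
  · exact palLength_le ⟨[s], rfl, by simpa using ⟨hne, hs⟩, List.flatten_singleton⟩

theorem exists_palLength_eq_succ {w : List A} (hw : w ≠ []) :
    ∃ p s, p ++ s = w ∧ s ≠ [] ∧ IsPalindrome s ∧ palLength w = palLength p + 1 := by
  obtain ⟨ps, hlen, hps, hflat⟩ := isPalConcat_palLength w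
  rcases ps.eq_nil_or_concat' with rfl | ⟨ps, s, rfl⟩
  · exact absurd hflat.symm (by simpa using hw)
  · have hp : IsPalConcat ps.flatten ps.length :=
      ⟨ps, rfl, fun q hq => hps q (List.mem_append_left _ hq), rfl⟩
    obtain ⟨hne, hs⟩ := hps s (by simp)
    refine ⟨ps.flatten, s, by simpa using hflat, hne, hs, le_antisymm ?_ ?_⟩
    · rw [← hflat, List.flatten_append, List.flatten_singleton]
      exact (palLength_append_le _ _).trans (by gcongr; exact palLength_le_one hs)
    · have := palLength_le hp
      simp only [List.length_append, List.length_singleton] at hlen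
      omega

end PalLength

section Word

variable {A : Type*} (u : ℕ → A)

theorem wordPrefix_add (m t : ℕ) :
    wordPrefix u (m + t) = wordPrefix u m ++ wordFactor u m t := by
  simp [wordPrefix, wordFactor, List.ofFn_add]

theorem PPL_add_le (m t : ℕ) : PPL u (m + t) ≤ PPL u m + t := by
  rw [PPL_eq_palLength, PPL_eq_palLength, wordPrefix_add]
  refine (palLength_append_le _ _).trans ?_
  simpa [wordFactor] using palLength_le_length (wordFactor u m t)

theorem PPL_zero : PPL u 0 = 0 := by
  rw [PPL_eq_palLength]
  simpa [wordPrefix] using palLength_le_length (wordPrefix u 0)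

theorem PPL_add_le_succ_of_isPalindrome {m ℓ : ℕ} (h : IsPalindrome (wordFactor u m ℓ)) :
    PPL u (m + ℓ) ≤ PPL u m + 1 := by
  rw [PPL_eq_palLength, PPL_eq_palLength, wordPrefix_add]
  exact (palLength_append_le _ _).trans (by gcongr; exact palLength_le_one h)

theorem exists_PPL_succ_eq (n : ℕ) : ∃ m ℓ, m + ℓ = n + 1 ∧ 0 < ℓ ∧
    IsPalindrome (wordFactor u m ℓ) ∧ PPL u (n + 1) = PPL u m + 1 := by
  obtain ⟨p, s, hps, hne, hs, hlen⟩ :=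
    exists_palLength_eq_succ (w := wordPrefix u (n + 1)) (by simp [wordPrefix])
  have hsum : p.length + s.length = n + 1 := by
    simpa [wordPrefix] using congrArg List.length hps
  rw [← hsum, wordPrefix_add] at hps
  obtain ⟨hp, hs'⟩ := List.append_inj hps.symm (by simp [wordPrefix])
  refine ⟨p.length, s.length, hsum, List.length_pos_iff.mpr hne, by rwa [hs'], ?_⟩
  rw [PPL_eq_palLength, PPL_eq_palLength, hp]
  exact hlen

def PalFactorsBoundedBy (L : ℕ) : Prop :=
  ∀ i ℓ, IsPalindrome (wordFactor u i ℓ) → ℓ ≤ L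

theorem PPL_le_PPL_succ_add {L : ℕ} (hL : PalFactorsBoundedBy u L) (n : ℕ) :
    PPL u n ≤ PPL u (n + 1) + L := by
  obtain ⟨m, ℓ, hmℓ, hℓ, hpal, heq⟩ := exists_PPL_succ_eq u n
  have hℓL := hL m ℓ hpal
  have hle := PPL_add_le u m (ℓ - 1)
  rw [show m + (ℓ - 1) = n by omega] at hle
  omega

theorem PPL_le_PPL_add_mul {L : ℕ} (hL : PalFactorsBoundedBy u L) (m t : ℕ) :
    PPL u m ≤ PPL u (m + t) + L * t := by
  induction t with
  | zero => simp
  | succ t ih =>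
    have := PPL_le_PPL_succ_add u hL (m + t)
    rw [Nat.mul_succ, ← Nat.add_assoc m]
    omega

def lastLetters (L n : ℕ) : Fin L → Option A :=
  fun i => if (i : ℕ) < n then some (u (n - 1 - i)) else none

theorem lastLetters_succ_eq {L m n : ℕ} (h : u m = u n)
    (hW : lastLetters u L m = lastLetters u L n) :
    lastLetters u L (m + 1) = lastLetters u L (n + 1) := by
  funext ⟨i, hi⟩
  rcases i with _ | i
  · simp [lastLetters, h]
  · have := congrFun hW ⟨i, by omega⟩
    simp only [lastLetters, Nat.add_lt_add_iff_right] at this ⊢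
    rwa [show m + 1 - 1 - (i + 1) = m - 1 - i by omega,
      show n + 1 - 1 - (i + 1) = n - 1 - i by omega]

theorem exists_wordFactor_eq_of_lastLetters_eq {L M N i ℓ : ℕ}
    (hW : lastLetters u L M = lastLetters u L N) (hℓ : ℓ ≤ L) (hi : i + ℓ = M) :
    ∃ j, j + ℓ = N ∧ wordFactor u j ℓ = wordFactor u i ℓ := by
  rcases Nat.eq_zero_or_pos ℓ with rfl | hℓ0
  · exact ⟨N, rfl, by simp [wordFactor]⟩
  have hN : ℓ ≤ N := by
    have := congrFun hW ⟨ℓ - 1, by omega⟩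
    by_contra hlt
    simp [lastLetters, show ℓ - 1 < M by omega, show ¬ ℓ - 1 < N by omega] at this
  refine ⟨N - ℓ, by omega, ?_⟩
  simp only [wordFactor]
  congr 1
  funext t
  have := congrFun hW ⟨ℓ - 1 - t, by omega⟩
  simp only [lastLetters, show ℓ - 1 - t < M by omega, show ℓ - 1 - t < N by omega, if_true,
    Option.some.injEq] at this
  rw [show N - ℓ + t = N - 1 - (ℓ - 1 - t) by omega,
    show i + t = M - 1 - (ℓ - 1 - t) by omega]
  exact this.symm

noncomputable def pplState (L n : ℕ) : (Fin L → Option A) × (Fin (L + 1) → ℤ) :=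
  (lastLetters u L n, fun j => (PPL u (n - j) : ℤ) - PPL u n)

theorem PPLdiff_le_of_pplState_eq {L : ℕ} (hL : PalFactorsBoundedBy u L) {m n : ℕ}
    (hW : lastLetters u L (m + 1) = lastLetters u L (n + 1))
    (hv : (pplState u L m).2 = (pplState u L n).2) : PPLdiff u n ≤ PPLdiff u m := by
  obtain ⟨i, ℓ, hiℓ, hℓ, hpal, heq⟩ := exists_PPL_succ_eq u m
  have hℓL := hL i ℓ hpal
  obtain ⟨j, hjℓ, hfac⟩ := exists_wordFactor_eq_of_lastLetters_eq u hW hℓL hiℓ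
  have hle := PPL_add_le_succ_of_isPalindrome u (hfac ▸ hpal)
  have hvℓ := congrFun hv ⟨ℓ - 1, by omega⟩
  simp only [pplState] at hvℓ
  rw [show m - (ℓ - 1) = i by omega, show n - (ℓ - 1) = j by omega] at hvℓ
  rw [hjℓ] at hle
  unfold PPLdiff
  omega

theorem pplState_succ_eq {L : ℕ} (hL : PalFactorsBoundedBy u L)
    {m n : ℕ} (h : u m = u n) (hs : pplState u L m = pplState u L n) :
    pplState u L (m + 1) = pplState u L (n + 1) := by
  have hW := lastLetters_succ_eq u h (congrArg Prod.fst hs)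
  have hv := congrArg Prod.snd hs
  have hd : PPLdiff u m = PPLdiff u n := le_antisymm
    (PPLdiff_le_of_pplState_eq u hL hW.symm hv.symm) (PPLdiff_le_of_pplState_eq u hL hW hv)
  refine Prod.ext hW (funext fun ⟨j, hj⟩ => ?_)
  rcases j with _ | j
  · simp [pplState]
  · have := congrFun hv ⟨j, by omega⟩
    simp only [pplState, PPLdiff] at this hd ⊢
    rw [show m + 1 - (j + 1) = m - j by omega, show n + 1 - (j + 1) = n - j by omega]
    omega

theorem PPL_sub_mem_Icc {L : ℕ} (hL : PalFactorsBoundedBy u L)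
    {n j : ℕ} (hj : j ≤ L) :
    (PPL u (n - j) : ℤ) - PPL u n ∈ Set.Icc (-(L : ℤ)) (L * L) := by
  have h1 := PPL_add_le u (n - j) (n - (n - j))
  have h2 := PPL_le_PPL_add_mul u hL (n - j) (n - (n - j))
  rw [show n - j + (n - (n - j)) = n by omega] at h1 h2
  have h3 : L * (n - (n - j)) ≤ L * L := Nat.mul_le_mul_left _ (by omega)
  constructor
  · omega
  · have : ((L * (n - (n - j)) : ℕ) : ℤ) ≤ L * L := by exact_mod_cast h3
    omega

theorem finite_range_pplState [Finite A] {L : ℕ} (hL : PalFactorsBoundedBy u L) :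
    (Set.range (pplState u L)).Finite := by
  refine (Set.finite_univ.prod
    (Set.Finite.pi fun _ => Set.finite_Icc (-(L : ℤ)) (L * L))).subset ?_
  rintro _ ⟨n, rfl⟩
  exact ⟨trivial, fun j _ => PPL_sub_mem_Icc u hL (Nat.lt_succ_iff.mp j.2)⟩

theorem kernelSeq_PPLdiff_finite [Finite A] {k L : ℕ} (hu : (kernelSeq k u).Finite)
    (hL : PalFactorsBoundedBy u L) :
    (kernelSeq k (PPLdiff u)).Finite := by
  have hL1 : 1 ≤ L := hL 0 1 (by simp [IsPalindrome, wordFactor])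
  have hstate := kernelSeq_finite_of_transition hu (finite_range_pplState u hL)
    fun _ _ h hs => pplState_succ_eq u hL h hs
  have hd : PPLdiff u = fun n => -(pplState u L (n + 1)).2 ⟨1, by omega⟩ := by
    funext n
    simp [pplState, PPLdiff]
  rw [hd]
  exact kernelSeq_map_finite (kernelSeq_shift_finite hstate 1) fun X => -X.2 ⟨1, by omega⟩

end Word

theorem ppl_regular_of_finitely_many_palindromes_general {A : Type*} [Finite A]
    (u : ℕ → A) (k : ℕ)
    (hu : (kernelSeq k u).Finite)
    (hpal : {w : List A | w ≠ [] ∧ IsPalindrome w ∧ ∃ i : ℕ, w = wordFactor u i w.length}.Finite) :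
    (Submodule.span ℤ (kernelSeq k (fun n => (PPL u n : ℤ)))).FG := by
  obtain ⟨L, hL⟩ := (hpal.image List.length).bddAbove
  have hbound : PalFactorsBoundedBy u L := by
    intro i ℓ h
    rcases Nat.eq_zero_or_pos ℓ with rfl | hℓ
    · exact Nat.zero_le L
    · have hne : wordFactor u i ℓ ≠ [] := List.length_pos_iff.mp (by simpa [wordFactor])
      simpa [wordFactor] using hL ⟨_, ⟨hne, h, i, by simp [wordFactor]⟩, rfl⟩
  have hsum : (fun n => (PPL u n : ℤ)) = fun n => ∑ m ∈ Finset.range n, PPLdiff u m := by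
    funext n
    rw [Finset.sum_congr rfl fun m _ => PPLdiff.eq_def u m,
      Finset.sum_range_sub (fun m => (PPL u m : ℤ)), PPL_zero, Nat.cast_zero, sub_zero]
  rw [hsum]
  exact span_kernelSeq_partialSum_fg (kernelSeq_PPLdiff_finite u hu hbound)

/-- If `u` is a `k`-automatic word (`k ≥ 2`) over a finite alphabet containing only
finitely many distinct palindromic factors, then `PPL_u : ℕ → ℤ` is `k`-regular. -/
theorem ppl_regular_of_finitely_many_palindromes {A : Type*} [Finite A]
    (u : ℕ → A) (k : ℕ) (hk : 2 ≤ k)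
    (hu : (kernelSeq k u).Finite)
    (hpal : {w : List A | w ≠ [] ∧ IsPalindrome w ∧ ∃ i : ℕ, w = wordFactor u i w.length}.Finite) :
    (Submodule.span ℤ (kernelSeq k (fun n => (PPL u n : ℤ)))).FG :=
  ppl_regular_of_finitely_many_palindromes_general u k hu hpal
end

section
/- The Rudin–Shapiro word u_rs contains no palindromic factor of length 13. -/
/-- The fixed point starting with `a` of the 2-uniform morphism sending each letter
`x` to the two-letter word `mu x` (assuming `(mu a).1 = a`):
the unique infinite word `w` with `w 0 = a`, `w (2n) = (mu (w n)).1`,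
`w (2n+1) = (mu (w n)).2`. -/
def fixedPoint2 {A : Type*} (mu : A → A × A) (a : A) : ℕ → A
  | 0 => a
  | n + 1 =>
    if (n + 1) % 2 = 0 then (mu (fixedPoint2 mu a ((n + 1) / 2))).1
    else (mu (fixedPoint2 mu a ((n + 1) / 2))).2
termination_by n => n
decreasing_by all_goals exact Nat.div_lt_self (Nat.succ_pos n) one_lt_two

/-- The morphism `φ_rs` on `{a, b, c, d}` (encoded as `0, 1, 2, 3`):
`a ↦ ab`, `b ↦ ac`, `c ↦ db`, `d ↦ dc`. -/
def phiRS : Fin 4 → Fin 4 × Fin 4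
  | 0 => (0, 1)
  | 1 => (0, 2)
  | 2 => (3, 1)
  | 3 => (3, 2)

/-- The fixed point `v = φ_rs^ω(a)`. -/
def vRS : ℕ → Fin 4 := fixedPoint2 phiRS 0

/-- The coding `ψ : a, b ↦ 0`, `c, d ↦ 1`. -/
def codingRS (x : Fin 4) : Fin 2 := if (x : ℕ) < 2 then 0 else 1

/-- The Rudin–Shapiro word `u_rs = ψ(φ_rs^ω(a)) = 0001001000011101⋯`. -/
def rudinShapiro (n : ℕ) : Fin 2 := codingRS (vRS n)

/- ### Auxiliary development -/

lemma vRS_even (n : ℕ) : vRS (2 * n) = (phiRS (vRS n)).1 := by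
  cases n with
  | zero => simp [vRS, fixedPoint2, phiRS]
  | succ k =>
    show fixedPoint2 phiRS 0 (2 * (k+1)) = _
    rw [show 2 * (k+1) = (2*k+1) + 1 by ring, fixedPoint2]
    have h : (2*k+1+1) % 2 = 0 := by omega
    rw [if_pos h, show (2*k+1+1)/2 = k+1 by omega]
    rfl

lemma vRS_odd (n : ℕ) : vRS (2 * n + 1) = (phiRS (vRS n)).2 := by
  show fixedPoint2 phiRS 0 ((2*n) + 1) = _
  rw [fixedPoint2]
  have h : (2*n+1) % 2 ≠ 0 := by omega
  rw [if_neg h, show (2*n+1)/2 = n by omega]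
  rfl

/-- `k`-fold expansion: the `t`-th letter of `φ^k(x)`. -/
def Ers : ℕ → Fin 4 → ℕ → Fin 4
  | 0, x, _ => x
  | k+1, x, t => if t % 2 = 0 then (phiRS (Ers k x (t/2))).1 else (phiRS (Ers k x (t/2))).2

lemma vRS_block : ∀ k n t : ℕ, t < 2^k → vRS (2^k * n + t) = Ers k (vRS n) t := by
  intro k
  induction k with
  | zero =>
    intro n t ht
    interval_cases t
    simp [Ers]
  | succ k ih =>
    intro n t ht
    have ht2 : t / 2 < 2^k := by
      have : (2:ℕ)^(k+1) = 2 * 2^k := by ring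
      omega
    rcases Nat.even_or_odd t with ⟨s, hs⟩ | ⟨s, hs⟩
    · have harith : 2^(k+1) * n + t = 2 * (2^k * n + s) := by
        rw [show (2:ℕ)^(k+1) * n = 2 * (2^k * n) by rw [pow_succ]; ring]; omega
      have hdiv : t / 2 = s := by omega
      rw [harith, vRS_even, ih n s (by omega)]
      simp [Ers, hdiv, show t % 2 = 0 by omega]
    · have harith : 2^(k+1) * n + t = 2 * (2^k * n + s) + 1 := by
        rw [show (2:ℕ)^(k+1) * n = 2 * (2^k * n) by rw [pow_succ]; ring]; omega
      have hdiv : t / 2 = s := by omega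
      rw [harith, vRS_odd, ih n s (by omega)]
      simp [Ers, hdiv, show t % 2 ≠ 0 by omega]

/-- The adjacent pairs occurring in `vRS`. -/
def pairsRS : List (Fin 4 × Fin 4) :=
  [(0,1), (0,2), (3,1), (3,2), (1,0), (1,3), (2,0), (2,3)]

lemma pair_mem : ∀ m : ℕ, (vRS m, vRS (m+1)) ∈ pairsRS := by
  intro m
  induction m using Nat.strong_induction_on with
  | _ m ih =>
    rcases Nat.even_or_odd m with ⟨k, hk⟩ | ⟨k, hk⟩
    · have hm : m = 2 * k := by omega
      rw [hm, show 2*k+1 = 2*k+1 from rfl, vRS_even, vRS_odd]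
      have : ∀ x : Fin 4, ((phiRS x).1, (phiRS x).2) ∈ pairsRS := by decide
      exact this _
    · have hm : m = 2 * k + 1 := by omega
      have h2 : m + 1 = 2 * (k + 1) := by omega
      rw [hm, show 2*k+1+1 = 2*(k+1) by ring, vRS_odd, vRS_even]
      have hk' : k < m := by omega
      have hmem := ih k hk'
      have hcl : ∀ q ∈ pairsRS, ((phiRS q.1).2, (phiRS q.2).1) ∈ pairsRS := by decide
      exact hcl (vRS k, vRS (k+1)) hmem

/-- Letter at offset `s` of the 32-letter block `φ⁴(x)φ⁴(y)`. -/
def Frs (x y : Fin 4) (s : ℕ) : Fin 2 :=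
  codingRS (if s < 16 then Ers 4 x s else Ers 4 y (s - 16))

lemma rs_factor (m r j : ℕ) (hr : r < 16) (hj : j ≤ 12) :
    rudinShapiro (16 * m + r + j) = Frs (vRS m) (vRS (m+1)) (r + j) := by
  unfold Frs rudinShapiro
  by_cases h : r + j < 16
  · rw [if_pos h, show 16 * m + r + j = 2^4 * m + (r + j) by norm_num; ring,
      vRS_block 4 m (r+j) (by norm_num; omega)]
  · rw [if_neg h, show 16 * m + r + j = 2^4 * (m+1) + (r + j - 16) by norm_num; omega,
      vRS_block 4 (m+1) (r+j-16) (by norm_num; omega)]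

lemma main_check : ∀ p ∈ pairsRS, ∀ r : Fin 16, ∃ j : Fin 13,
    Frs p.1 p.2 ((r : ℕ) + j) ≠ Frs p.1 p.2 ((r : ℕ) + (12 - (j : ℕ))) := by
  decide

/-- The Rudin–Shapiro word contains no palindromic factor of length 13. -/
theorem rudinShapiro_no_palindrome_13 :
    ∀ i : ℕ, ¬ IsPalindrome (wordFactor rudinShapiro i 13) := by
  intro i hpal
  unfold IsPalindrome wordFactor at hpal
  have key : ∀ j : ℕ, (hj : j < 13) →
      rudinShapiro (i + j) = rudinShapiro (i + (12 - j)) := by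
    intro j hj
    have h1 := List.getElem_of_eq hpal
      (show j < (List.ofFn (fun j : Fin 13 => rudinShapiro (i + j))).reverse.length by simp [hj])
    rw [List.getElem_reverse] at h1
    simp only [List.getElem_ofFn, List.length_ofFn] at h1
    rw [show 13 - 1 - j = 12 - j by omega] at h1
    exact h1.symm
  set m := i / 16 with hm
  set r := i % 16 with hr
  have hi : i = 16 * m + r := by omega
  have hr16 : r < 16 := Nat.mod_lt _ (by norm_num)
  obtain ⟨j, hne⟩ := main_check (vRS m, vRS (m+1)) (pair_mem m) ⟨r, hr16⟩
  have hj12 : (j : ℕ) ≤ 12 := by omega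
  have e1 : rudinShapiro (i + j) = Frs (vRS m) (vRS (m+1)) (r + j) := by
    rw [hi]; exact rs_factor m r j hr16 hj12
  have e2 : rudinShapiro (i + (12 - (j:ℕ))) = Frs (vRS m) (vRS (m+1)) (r + (12 - (j:ℕ))) := by
    rw [hi]; exact rs_factor m r _ hr16 (by omega)
  exact hne (by rw [← e1, ← e2]; exact key j j.isLt)
end

section
/- Let u = μ^ω(a) be the unique fixed point starting with a of the morphism μ on {a,b,c} given by μ(a)=ab, μ(b)=bc, μ(c)=ca. Then every palindromic factor of u has length at most 3, and u has a palindromic factor of length exactly 3. -/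
/-- The morphism `μ` on `{a, b, c}` (encoded as `0, 1, 2`):
`a ↦ ab`, `b ↦ bc`, `c ↦ ca`. -/
def muABC : Fin 3 → Fin 3 × Fin 3
  | 0 => (0, 1)
  | 1 => (1, 2)
  | 2 => (2, 0)

/-- The fixed point `u = μ^ω(a) = abbcbccabccacaab⋯`. -/
def abcWord : ℕ → Fin 3 := fixedPoint2 muABC 0

/-! ### Auxiliary lemmas -/

lemma pal_iff' {A : Type*} (u : ℕ → A) (i ℓ : ℕ) :
    IsPalindrome (wordFactor u i ℓ) ↔ ∀ j, j < ℓ → u (i + j) = u (i + (ℓ - 1 - j)) := by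
  unfold IsPalindrome wordFactor
  constructor
  · intro h j hj
    have := List.getElem_of_eq h.symm (by simpa using hj :
      j < (List.ofFn fun j : Fin ℓ => u (i + j)).length)
    simpa [List.getElem_reverse, List.getElem_ofFn] using this
  · intro h
    apply List.ext_getElem (by simp)
    intro k h1 h2
    have hk : k < ℓ := by simpa using h2
    simp only [List.getElem_reverse, List.getElem_ofFn, List.length_ofFn]
    exact (h k hk).symm

lemma abc_even (n : ℕ) : abcWord (2*n) = (muABC (abcWord n)).1 := by
  cases n with
  | zero => simp [abcWord, fixedPoint2, muABC]
  | succ m =>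
    have h : 2*(m+1) = (2*m+1)+1 := by ring
    rw [h, abcWord, fixedPoint2]
    have h2 : (2*m+1+1) % 2 = 0 := by omega
    have h3 : (2*m+1+1)/2 = m+1 := by omega
    rw [h2, h3]; simp [abcWord]

lemma abc_odd (n : ℕ) : abcWord (2*n+1) = (muABC (abcWord n)).2 := by
  rw [abcWord, fixedPoint2]
  have h2 : (2*n+1) % 2 = 1 := by omega
  have h3 : (2*n+1)/2 = n := by omega
  rw [h2, h3]; simp [abcWord]

lemma mu_ne : ∀ x : Fin 3, (muABC x).1 ≠ (muABC x).2 := by decide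

lemma mu_fst_inj {x y : Fin 3} (h : (muABC x).1 = (muABC y).1) : x = y := by
  revert h; revert x y; decide

lemma mu_snd_inj {x y : Fin 3} (h : (muABC x).2 = (muABC y).2) : x = y := by
  revert h; revert x y; decide

lemma mu_no_swap (x y : Fin 3) :
    ¬ ((muABC x).1 = (muABC y).2 ∧ (muABC x).2 = (muABC y).1) := by
  revert x y; decide

/-- `u` contains no square of a single letter inside one block. -/
lemma abc_no_block_square (n : ℕ) : abcWord (2*n) ≠ abcWord (2*n+1) := by
  rw [abc_even, abc_odd]; exact mu_ne _

/-- `u` contains no cube `xxx`. -/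
lemma abc_no_cube (n : ℕ) :
    ¬ (abcWord n = abcWord (n+1) ∧ abcWord (n+1) = abcWord (n+2)) := by
  rintro ⟨h1, h2⟩
  rcases Nat.even_or_odd n with ⟨m, hm⟩ | ⟨m, hm⟩
  · rw [← two_mul] at hm
    rw [hm, show 2*m + 1 = 2*m + 1 from rfl] at h1
    exact abc_no_block_square m h1
  · have hm' : n + 1 = 2*(m+1) := by omega
    have hm'' : n + 2 = 2*(m+1)+1 := by omega
    rw [hm', hm''] at h2
    exact abc_no_block_square (m+1) h2

lemma abc_no_pal4 (i : ℕ) : ¬ IsPalindrome (wordFactor abcWord i 4) := by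
  intro h
  rw [pal_iff'] at h
  have e0 := h 0 (by norm_num)
  have e1 := h 1 (by norm_num)
  norm_num at e0 e1
  rcases Nat.even_or_odd i with ⟨m, hm⟩ | ⟨m, hm⟩
  · rw [← two_mul] at hm
    have h0 : i = 2*m := hm
    have h3 : i + 3 = 2*(m+1)+1 := by omega
    have h1 : i + 1 = 2*m+1 := by omega
    have h2 : i + 2 = 2*(m+1) := by omega
    rw [h3, h0, abc_even, abc_odd] at e0
    rw [h2, h1, abc_odd, abc_even] at e1
    exact mu_no_swap (abcWord m) (abcWord (m+1)) ⟨e0, e1⟩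
  · have h1 : i + 1 = 2*(m+1) := by omega
    have h2 : i + 2 = 2*(m+1)+1 := by omega
    rw [h1, h2] at e1
    exact abc_no_block_square (m+1) e1

lemma abc_no_pal5 (i : ℕ) : ¬ IsPalindrome (wordFactor abcWord i 5) := by
  intro h
  rw [pal_iff'] at h
  have e0 := h 0 (by norm_num)
  have e1 := h 1 (by norm_num)
  norm_num at e0 e1
  rcases Nat.even_or_odd i with ⟨m, hm⟩ | ⟨m, hm⟩
  · rw [← two_mul] at hm
    have h0 : i = 2*m := hm
    have h4 : i + 4 = 2*(m+2) := by omega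
    have h1 : i + 1 = 2*m+1 := by omega
    have h3 : i + 3 = 2*(m+1)+1 := by omega
    rw [h4, h0, abc_even, abc_even] at e0
    rw [h3, h1, abc_odd, abc_odd] at e1
    have hm02 : abcWord m = abcWord (m+2) := mu_fst_inj e0
    have hm01 : abcWord m = abcWord (m+1) := mu_snd_inj e1
    exact abc_no_cube m ⟨hm01, hm01 ▸ hm02⟩
  · have h0 : i = 2*m+1 := hm
    have h4 : i + 4 = 2*(m+2)+1 := by omega
    have h1 : i + 1 = 2*(m+1) := by omega
    have h3 : i + 3 = 2*(m+2) := by omega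
    rw [h4, h0, abc_odd, abc_odd] at e0
    rw [h3, h1, abc_even, abc_even] at e1
    have hm02 : abcWord m = abcWord (m+2) := mu_snd_inj e0
    have hm12 : abcWord (m+1) = abcWord (m+2) := mu_fst_inj e1
    exact abc_no_cube m ⟨hm02.trans hm12.symm, hm12⟩

lemma abc_pal_le (ℓ : ℕ) : ∀ i, IsPalindrome (wordFactor abcWord i ℓ) → ℓ ≤ 3 := by
  induction ℓ using Nat.strong_induction_on with
  | _ ℓ ih =>
    intro i hpal
    by_contra hgt
    push_neg at hgt
    rcases eq_or_ne ℓ 4 with h4 | h4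
    · exact abc_no_pal4 i (h4 ▸ hpal)
    rcases eq_or_ne ℓ 5 with h5 | h5
    · exact abc_no_pal5 i (h5 ▸ hpal)
    have h6 : 6 ≤ ℓ := by omega
    have hpal' : IsPalindrome (wordFactor abcWord (i+1) (ℓ-2)) := by
      rw [pal_iff'] at hpal ⊢
      intro j hj
      have hstep := hpal (j+1) (by omega)
      have e1 : i + 1 + j = i + (j+1) := by omega
      have e2 : i + 1 + (ℓ - 2 - 1 - j) = i + (ℓ - 1 - (j+1)) := by omega
      rw [e1, e2]
      exact hstep
    have := ih (ℓ-2) (by omega) (i+1) hpal'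
    omega

/-- Every palindromic factor of the fixed point `μ^ω(a)` of `a ↦ ab`, `b ↦ bc`,
`c ↦ ca` has length at most 3, and there is a palindromic factor of length
exactly 3. -/
theorem abcWord_palindromes :
    (∀ i ℓ : ℕ, 1 ≤ ℓ → IsPalindrome (wordFactor abcWord i ℓ) → ℓ ≤ 3) ∧
      (∃ i : ℕ, IsPalindrome (wordFactor abcWord i 3)) := by
  constructor
  · intro i ℓ _ hpal
    exact abc_pal_le ℓ i hpal
  · refine ⟨2, ?_⟩
    have h0 : abcWord 0 = 0 := by simp [abcWord, fixedPoint2]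
    have h1 : abcWord 1 = 1 := by
      have e := abc_odd 0; norm_num at e; rw [e, h0]; rfl
    have h2 : abcWord 2 = 1 := by
      have e := abc_even 1; norm_num at e; rw [e, h1]; rfl
    have h4 : abcWord 4 = 1 := by
      have e := abc_even 2; norm_num at e; rw [e, h2]; rfl
    rw [pal_iff']
    intro j hj
    interval_cases j <;> norm_num <;> rw [h2, h4]
end
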